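/- Ladder relation (part of Theorem 4.1 of the paper): for all natural numbers p,q,ℓ with 1 ≤ ℓ ≤ p+q, one has [J₊, η(p,q,ℓ)] = ε²·ℓ·(p+q−ℓ+1)·η(p,q,ℓ−1). -/

import Mathlib

open MvPolynomial

noncomputable section

/-- The polynomial ring ℂ[x,y]. -/
abbrev P2 : Type := MvPolynomial (Fin 2) ℂ

/-- The algebra of ℂ-linear endomorphisms of ℂ[x,y]. -/
abbrev E : Type := Module.End ℂ P2

/-- `a₊` : multiplication by `x`. -/
def aP : E := LinearMap.mulLeft ℂ (X 0 : P2)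

/-- `b₊` : multiplication by `y`. -/
def bP : E := LinearMap.mulLeft ℂ (X 1 : P2)

/-- `a₋ = ε ∂/∂x`. -/
def aM (ε : ℝ) : E := (ε : ℂ) • (pderiv (0 : Fin 2)).toLinearMap

/-- `b₋ = ε ∂/∂y`. -/
def bM (ε : ℝ) : E := (ε : ℂ) • (pderiv (1 : Fin 2)).toLinearMap

def J0 (ε : ℝ) : E := (1/2 : ℂ) • (aP * aM ε - bP * bM ε)
def Jp (ε : ℝ) : E := aP * bM ε
def Jm (ε : ℝ) : E := aM ε * bP
def K0 (ε : ℝ) : E := (1/2 : ℂ) • (aP * aM ε + bP * bM ε + (ε : ℂ) • (1 : E))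
def Kp : E := aP * bP
def Km (ε : ℝ) : E := aM ε * bM ε

/-- `(ad J₋)(w) = J₋w − wJ₋`. -/
def adJm (ε : ℝ) (w : E) : E := Jm ε * w - w * Jm ε

/-- `η(p,q,ℓ) = (ad J₋)^ℓ (a₊^p b₋^q)`. -/
def eta (ε : ℝ) (p q ℓ : ℕ) : E := (adJm ε)^[ℓ] (aP ^ p * bM ε ^ q)

/- ### Auxiliary lemmas -/

lemma lieMul (x y z : E) : ⁅x, y * z⁆ = ⁅x, y⁆ * z + y * ⁅x, z⁆ := by
  simp only [Ring.lie_def, mul_sub, sub_mul, mul_assoc]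
  abel

lemma smulLie (t : ℂ) (x y : E) : ⁅t • x, y⁆ = t • ⁅x, y⁆ := by
  simp [Ring.lie_def, smul_sub, smul_mul_assoc, mul_smul_comm]

lemma lieSmul (t : ℂ) (x y : E) : ⁅x, t • y⁆ = t • ⁅x, y⁆ := by
  simp [Ring.lie_def, smul_sub, smul_mul_assoc, mul_smul_comm]

lemma subLie (x y z : E) : ⁅x - y, z⁆ = ⁅x, z⁆ - ⁅y, z⁆ := by
  simp only [Ring.lie_def, sub_mul, mul_sub]
  abel

lemma lieLeib (x y z : E) : ⁅x, ⁅y, z⁆⁆ = ⁅⁅x, y⁆, z⁆ + ⁅y, ⁅x, z⁆⁆ := by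
  simp only [Ring.lie_def, mul_sub, sub_mul, mul_assoc]
  abel

lemma commute_lie_eq {a b : E} (h : Commute a b) : ⁅a, b⁆ = 0 := by
  rw [Ring.lie_def, h.eq, sub_self]

lemma pd_comm (i j : Fin 2) (f : P2) :
    pderiv i (pderiv j f) = pderiv j (pderiv i f) := by
  induction f using MvPolynomial.induction_on with
  | C a => simp
  | add g h hg hh => simp [hg, hh]
  | mul_X g k hg =>
      simp only [pderiv_mul, map_add, pderiv_X, hg, Pi.single_apply]
      split_ifs <;> simp [hg] <;> ring

lemma comm_aP_bP : Commute aP bP := by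
  apply LinearMap.ext; intro f
  simp [aP, bP, Module.End.mul_apply]
  ring

lemma comm_aP_bM (ε : ℝ) : Commute aP (bM ε) := by
  apply LinearMap.ext; intro f
  simp [aP, bM, Module.End.mul_apply, pderiv_mul, pderiv_X_of_ne,
    ← Complex.coe_smul, smul_eq_C_mul]
  try ring

lemma comm_bP_aM (ε : ℝ) : Commute bP (aM ε) := by
  apply LinearMap.ext; intro f
  simp [bP, aM, Module.End.mul_apply, pderiv_mul, pderiv_X_of_ne,
    ← Complex.coe_smul, smul_eq_C_mul]
  try ring

lemma comm_aM_bM (ε : ℝ) : Commute (aM ε) (bM ε) := by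
  apply LinearMap.ext; intro f
  simp [aM, bM, Module.End.mul_apply, ← Complex.coe_smul, smul_eq_C_mul, pd_comm]
  try ring

lemma comm_aP_v (ε : ℝ) (p q : ℕ) : Commute aP (aP ^ p * bM ε ^ q) :=
  ((Commute.refl aP).pow_right p).mul_right ((comm_aP_bM ε).pow_right q)

lemma comm_bM_v (ε : ℝ) (p q : ℕ) : Commute (bM ε) (aP ^ p * bM ε ^ q) :=
  ((comm_aP_bM ε).symm.pow_right p).mul_right ((Commute.refl (bM ε)).pow_right q)

lemma lie_A_aP (ε : ℝ) : ⁅aP * aM ε, aP⁆ = (ε : ℂ) • aP := by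
  apply LinearMap.ext; intro f
  simp [Ring.lie_def, aM, aP, Module.End.mul_apply, pderiv_mul, pderiv_X_self,
    ← Complex.coe_smul, smul_eq_C_mul]
  try ring

lemma lie_B_bM (ε : ℝ) : ⁅bP * bM ε, bM ε⁆ = (-(ε : ℂ)) • bM ε := by
  apply LinearMap.ext; intro f
  simp [Ring.lie_def, bM, bP, Module.End.mul_apply, pderiv_mul, pderiv_X_self,
    ← Complex.coe_smul, smul_eq_C_mul, pd_comm]
  try ring

lemma comm_A_bM (ε : ℝ) : Commute (aP * aM ε) (bM ε) :=
  Commute.mul_left (comm_aP_bM ε) (comm_aM_bM ε)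

lemma comm_B_aP (ε : ℝ) : Commute (bP * bM ε) aP :=
  Commute.mul_left comm_aP_bP.symm (comm_aP_bM ε).symm

lemma lie_A_pow (ε : ℝ) (p : ℕ) : ⁅aP * aM ε, aP ^ p⁆ = ((ε : ℂ) * p) • aP ^ p := by
  induction p with
  | zero => simp [Ring.lie_def]
  | succ n ih =>
      rw [pow_succ, lieMul, ih, lie_A_aP]
      rw [smul_mul_assoc, mul_smul_comm, ← pow_succ, ← add_smul]
      push_cast
      ring_nf

lemma lie_B_pow (ε : ℝ) (q : ℕ) :
    ⁅bP * bM ε, bM ε ^ q⁆ = (-(ε : ℂ) * q) • bM ε ^ q := by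
  induction q with
  | zero => simp [Ring.lie_def]
  | succ n ih =>
      rw [pow_succ, lieMul, ih, lie_B_bM]
      rw [smul_mul_assoc, mul_smul_comm, ← pow_succ, ← add_smul]
      push_cast
      ring_nf

lemma lie_J0_v (ε : ℝ) (p q : ℕ) :
    ⁅J0 ε, aP ^ p * bM ε ^ q⁆
      = ((ε : ℂ) * ((p : ℂ) + q) / 2) • (aP ^ p * bM ε ^ q) := by
  have hA : ⁅aP * aM ε, aP ^ p * bM ε ^ q⁆ = ((ε : ℂ) * p) • (aP ^ p * bM ε ^ q) := by
    rw [lieMul, lie_A_pow, commute_lie_eq ((comm_A_bM ε).pow_right q)]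
    simp [smul_mul_assoc]
  have hB : ⁅bP * bM ε, aP ^ p * bM ε ^ q⁆ = (-(ε : ℂ) * q) • (aP ^ p * bM ε ^ q) := by
    rw [lieMul, lie_B_pow, commute_lie_eq ((comm_B_aP ε).pow_right p)]
    simp [mul_smul_comm]
    module
  rw [J0, smulLie, subLie, hA, hB]
  rw [smul_sub, smul_smul, smul_smul, ← sub_smul]
  congr 1
  push_cast
  ring

lemma J0_two (ε : ℝ) : ((2 : ℂ) * ε) • J0 ε = (ε : ℂ) • (aP * aM ε - bP * bM ε) := by
  rw [J0, smul_smul]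
  congr 1
  ring

lemma lie_Jp_Jm (ε : ℝ) : ⁅Jp ε, Jm ε⁆ = ((2 : ℂ) * ε) • J0 ε := by
  rw [J0_two]
  apply LinearMap.ext; intro f
  simp [Ring.lie_def, Jp, Jm, aP, bP, aM, bM, Module.End.mul_apply,
    pderiv_mul, pderiv_X_self, pderiv_X_of_ne,
    ← Complex.coe_smul, smul_eq_C_mul, pd_comm]
  try ring

lemma lie_AB_Jm (ε : ℝ) :
    ⁅aP * aM ε - bP * bM ε, Jm ε⁆ = ((-2 : ℂ) * ε) • Jm ε := by
  apply LinearMap.ext; intro f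
  simp [Ring.lie_def, Jm, aP, bP, aM, bM, Module.End.mul_apply,
    pderiv_mul, pderiv_X_self, pderiv_X_of_ne,
    ← Complex.coe_smul, smul_eq_C_mul, pd_comm, map_mul, map_neg, map_ofNat]
  try ring

lemma lie_J0_Jm (ε : ℝ) : ⁅J0 ε, Jm ε⁆ = (-(ε : ℂ)) • Jm ε := by
  rw [J0, smulLie, lie_AB_Jm, smul_smul]
  congr 1
  ring

lemma adJm_eq (ε : ℝ) (w : E) : adJm ε w = ⁅Jm ε, w⁆ := (Ring.lie_def _ _).symm

lemma eta_succ (ε : ℝ) (p q ℓ : ℕ) :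
    eta ε p q (ℓ + 1) = ⁅Jm ε, eta ε p q ℓ⁆ := by
  rw [eta, Function.iterate_succ_apply', ← adJm_eq]; rfl

lemma lie_J0_eta (ε : ℝ) (p q ℓ : ℕ) :
    ⁅J0 ε, eta ε p q ℓ⁆
      = ((ε : ℂ) * (((p : ℂ) + q) / 2 - ℓ)) • eta ε p q ℓ := by
  induction ℓ with
  | zero =>
      have h := lie_J0_v ε p q
      simp only [eta, Function.iterate_zero_apply] at h ⊢
      rw [h]
      congr 1
      push_cast
      ring
  | succ n ih =>
      rw [eta_succ, lieLeib, ih, lieSmul, lie_J0_Jm, smulLie, ← add_smul, ← eta_succ]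
      congr 1
      push_cast
      ring

lemma lie_Jp_v (ε : ℝ) (p q : ℕ) : ⁅Jp ε, aP ^ p * bM ε ^ q⁆ = 0 :=
  commute_lie_eq (Commute.mul_left (comm_aP_v ε p q) (comm_bM_v ε p q))

lemma lie_Jp_eta (ε : ℝ) (p q ℓ : ℕ) :
    ⁅Jp ε, eta ε p q (ℓ + 1)⁆
      = ((ε : ℂ) ^ 2 * ((ℓ : ℂ) + 1) * ((p : ℂ) + q - ℓ)) • eta ε p q ℓ := by
  induction ℓ with
  | zero =>
      have h0 : ⁅Jp ε, eta ε p q 0⁆ = 0 := by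
        simpa only [eta, Function.iterate_zero_apply] using lie_Jp_v ε p q
      rw [eta_succ, lieLeib, lie_Jp_Jm, smulLie, lie_J0_eta, h0, commute_lie_eq (Commute.zero_right (Jm ε)), add_zero,
        smul_smul]
      congr 1
      push_cast
      ring
  | succ n ih =>
      rw [eta_succ, lieLeib, lie_Jp_Jm, smulLie, lie_J0_eta, ih, lieSmul, ← eta_succ,
        smul_smul, ← add_smul]
      congr 1
      push_cast
      ring

/-- Ladder relation (part of Theorem 4.1):
`[J₊, η(p,q,ℓ)] = ε²·ℓ·(p+q−ℓ+1)·η(p,q,ℓ−1)` for `1 ≤ ℓ ≤ p+q`. -/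
theorem eta_ladder_relation (ε : ℝ) (p q ℓ : ℕ) (hℓ1 : 1 ≤ ℓ) (hℓ : ℓ ≤ p + q) :
    Jp ε * eta ε p q ℓ - eta ε p q ℓ * Jp ε
      = ((ε : ℂ) ^ 2 * (ℓ : ℂ) * ((p : ℂ) + (q : ℂ) - (ℓ : ℂ) + 1)) •
          eta ε p q (ℓ - 1) := by
  obtain ⟨n, rfl⟩ : ∃ n, ℓ = n + 1 := ⟨ℓ - 1, (Nat.succ_pred_eq_of_pos hℓ1).symm⟩
  have h := lie_Jp_eta ε p q n
  rw [Ring.lie_def] at h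
  rw [h]
  simp only [Nat.add_sub_cancel]
  congr 1
  push_cast
  ring
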